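/- arXiv:math/0001138 — 5 statements merged into one kernel-verified Lean document; each statement's English description precedes it below -/
import Mathlib

section
/- For every integer n ≥ 1 the following two inclusions of two-sided ideals of B hold: (i) ⟨Jⁿ⟩ + Iⁿ ⊆ (⟨J⟩ + I)ⁿ, and (ii) (⟨J⟩ + I)^(2(n²+n−1)) ⊆ ⟨Jⁿ⟩ + Iⁿ. In other words, the decreasing filtration (⟨Jⁿ⟩ + Iⁿ)_{n≥1} of B and the decreasing filtration ((⟨J⟩ + I)ⁿ)_{n≥1} of B are interleaved (each term of one filtration contains a term of the other), which expresses the isomorphism of pro-rings B/(⟨Jⁿ⟩+Iⁿ)^∞ ≅ B/(⟨J⟩+I)^∞ of Lemma 3.7. -/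
/-- The `n`-th power of a subset `U` of a ring `B`: the additive subgroup generated by
all products `u₁ ⋯ uₙ` of `n` elements of `U`. -/
def setPow {B : Type*} [Ring B] (U : Set B) (n : ℕ) : AddSubgroup B :=
  AddSubgroup.closure {x | ∃ l : List B, l.length = n ∧ (∀ y ∈ l, y ∈ U) ∧ x = l.prod}

/-!
Write `I = ker ε`. Since `b = ε b + (b - ε b)`, the ideal `⟨J⟩ + I` is the preimage `ε⁻¹(J)`,
which as an additive group is just `J + I`. Additive subgroups of `B` form an idempotent
semiring (`Submodule ℤ B`) in which `⟨X⟩ = ⊤ * X * ⊤` and `setPow U n = (span U) ^ n`, so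
everything becomes an inequality in that semiring, and (i) is immediate.

For (ii), expand a product of factors from `J + I` into words in `J` and `I`. A word of length
`(r + 1) n` either starts with `n` letters from `J`, and lies in `⟨Jⁿ⟩`, or has a letter from
`I` among its first `n`, which absorbs the prefix and is followed by at least `r n` letters.
Induction on `r` gives `(J + I) ^ (r n) ⊆ ⟨Jⁿ⟩ + Iʳ`; take `r = n`.
-/

open Pointwise

namespace IdemSemiring

variable {α : Type*} [IdemSemiring α] [OrderTop α] {i j p : α}

theorem top_mul_pow_le (hp : ⊤ * p ≤ p) : ∀ {n : ℕ}, n ≠ 0 → ⊤ * p ^ n ≤ p ^ n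
  | n + 1, _ => by rw [pow_succ', ← mul_assoc]; gcongr

theorem pow_mul_top_le (hp : p * ⊤ ≤ p) : ∀ {n : ℕ}, n ≠ 0 → p ^ n * ⊤ ≤ p ^ n
  | n + 1, _ => by rw [pow_succ, mul_assoc]; gcongr

theorem sup_pow_add_le (hl : ⊤ * i ≤ i) (hr : i * ⊤ ≤ i) (m : ℕ) :
    ∀ a : ℕ, (j ⊔ i) ^ (a + m) ≤ j ^ a * (j ⊔ i) ^ m ⊔ i * (j ⊔ i) ^ m
  | 0 => by simp
  | a + 1 => by
    have mul_i_le (x : α) : x * i ≤ i := (mul_le_mul_left le_top i).trans hl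
    have i_mul_le (x : α) : i * x ≤ i := (mul_le_mul_right le_top i).trans hr
    calc (j ⊔ i) ^ (a + 1 + m) = (j ⊔ i) * (j ⊔ i) ^ (a + m) := by
          rw [add_right_comm, pow_succ']
      _ ≤ (j ⊔ i) * (j ^ a * (j ⊔ i) ^ m ⊔ i * (j ⊔ i) ^ m) := by
          gcongr; exact sup_pow_add_le hl hr m a
      _ = j * j ^ a * (j ⊔ i) ^ m ⊔ i * j ^ a * (j ⊔ i) ^ m ⊔
            (j * i * (j ⊔ i) ^ m ⊔ i * i * (j ⊔ i) ^ m) := by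
          simp only [← add_eq_sup, add_mul, mul_add, mul_assoc]
      _ ≤ j ^ (a + 1) * (j ⊔ i) ^ m ⊔ i * (j ⊔ i) ^ m := by
          grw [← pow_succ', i_mul_le (j ^ a), mul_i_le j, mul_i_le i]
          simp

theorem sup_pow_mul_le (hl : ⊤ * i ≤ i) (hr : i * ⊤ ≤ i) (n : ℕ) :
    ∀ r : ℕ, (j ⊔ i) ^ (r * n) ≤ ⊤ * j ^ n * ⊤ ⊔ i ^ r
  | 0 => by simp
  | r + 1 => by
    calc (j ⊔ i) ^ ((r + 1) * n) ≤ j ^ n * (j ⊔ i) ^ (r * n) ⊔ i * (j ⊔ i) ^ (r * n) := by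
          rw [add_one_mul, add_comm]; exact sup_pow_add_le hl hr _ n
      _ ≤ 1 * j ^ n * ⊤ ⊔ i * (⊤ * j ^ n * ⊤ ⊔ i ^ r) := by
          rw [one_mul]; gcongr
          · exact le_top
          · exact sup_pow_mul_le hl hr n r
      _ = 1 * j ^ n * ⊤ ⊔ i * ⊤ * j ^ n * ⊤ ⊔ i ^ (r + 1) := by
          simp only [← add_eq_sup, mul_add, mul_assoc, pow_succ', add_assoc]
      _ ≤ ⊤ * j ^ n * ⊤ ⊔ i ^ (r + 1) := by
          grw [le_top (a := i * ⊤), le_top (a := (1 : α)), sup_idem]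

theorem sup_pow_le (hl : ⊤ * i ≤ i) (hr : i * ⊤ ≤ i) {n r L : ℕ} (hr0 : r ≠ 0) (hL : r * n ≤ L) :
    (j ⊔ i) ^ L ≤ ⊤ * j ^ n * ⊤ ⊔ i ^ r := by
  obtain ⟨c, rfl⟩ := Nat.exists_eq_add_of_le hL
  calc (j ⊔ i) ^ (r * n + c) ≤ ⊤ * (⊤ * j ^ n * ⊤ ⊔ i ^ r) := by
        rw [add_comm, pow_add]
        grw [le_top (a := (j ⊔ i) ^ c), sup_pow_mul_le hl hr n r]
    _ ≤ ⊤ * j ^ n * ⊤ ⊔ i ^ r := by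
        simp only [← add_eq_sup, mul_add, ← mul_assoc]
        grw [le_top (a := ⊤ * ⊤), top_mul_pow_le hl hr0]

theorem top_mul_pow_mul_top_sup_pow_le (hl : ⊤ * p ≤ p) (hr : p * ⊤ ≤ p) (hj : j ≤ p) (hi : i ≤ p)
    {n : ℕ} (hn : n ≠ 0) : ⊤ * j ^ n * ⊤ ⊔ i ^ n ≤ p ^ n := by
  grw [hj, hi, top_mul_pow_le hl hn, pow_mul_top_le hr hn, sup_idem]

end IdemSemiring

section SetPow

open Submodule

theorem Set.setOf_list_prod_eq_pow {M : Type*} [Monoid M] (U : Set M) :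
    ∀ n : ℕ, {x | ∃ l : List M, l.length = n ∧ (∀ y ∈ l, y ∈ U) ∧ x = l.prod} = U ^ n
  | 0 => by ext; simp
  | n + 1 => by
    ext x
    rw [pow_succ', ← Set.setOf_list_prod_eq_pow U n]
    constructor
    · rintro ⟨_ | ⟨y, l⟩, hlen, hmem, rfl⟩
      · simp at hlen
      · exact ⟨y, hmem y (by simp), l.prod,
          ⟨l, by simpa using hlen, fun z hz => hmem z (by simp [hz]), rfl⟩, rfl⟩
    · rintro ⟨y, hy, _, ⟨l, hlen, hmem, rfl⟩, rfl⟩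
      exact ⟨y :: l, by simpa, by simpa [hy] using hmem, rfl⟩

theorem setPow_eq_toAddSubgroup_span_pow {B : Type*} [Ring B] (U : Set B) (n : ℕ) :
    setPow U n = (span ℤ U ^ n).toAddSubgroup := by
  rw [setPow, Set.setOf_list_prod_eq_pow, span_pow, span_int_eq_addSubgroupClosure]

theorem span_int_coe_image_setPow {B : Type*} [Ring B] {A : Subring B} (U : Set A) (n : ℕ) :
    span ℤ ((↑) '' (setPow U n : Set A)) = span ℤ ((↑) '' U : Set B) ^ n := by
  rw [setPow_eq_toAddSubgroup_span_pow, coe_toAddSubgroup]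
  change span ℤ (A.subtype.toIntAlgHom.toLinearMap '' _) = _
  rw [← map_coe, span_eq, Submodule.map_pow, map_span]
  rfl

end SetPow

namespace TwoSidedIdeal

variable {B : Type*} [Ring B]

theorem top_mul_span_int_le (T : TwoSidedIdeal B) :
    ⊤ * Submodule.span ℤ (T : Set B) ≤ Submodule.span ℤ T := by
  rw [← Submodule.span_univ, Submodule.span_mul_span]
  refine Submodule.span_mono ?_
  rintro _ ⟨b, -, t, ht, rfl⟩
  exact T.mul_mem_left b t ht

theorem span_int_mul_top_le (T : TwoSidedIdeal B) :
    Submodule.span ℤ (T : Set B) * ⊤ ≤ Submodule.span ℤ T := by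
  rw [← Submodule.span_univ, Submodule.span_mul_span]
  refine Submodule.span_mono ?_
  rintro _ ⟨t, ht, b, -, rfl⟩
  exact T.mul_mem_right t b ht

theorem span_int_coe_span (s : Set B) :
    Submodule.span ℤ (span s : Set B) = ⊤ * Submodule.span ℤ s * ⊤ := by
  have : (span s : Set B) = AddSubgroup.closure (Set.univ * s * Set.univ) :=
    Set.ext fun _ => mem_span_iff_mem_addSubgroup_closure
  rw [this, ← Submodule.span_int_eq_addSubgroupClosure, Submodule.coe_toAddSubgroup,
    Submodule.span_eq, ← Submodule.span_mul_span, ← Submodule.span_mul_span, Submodule.span_univ]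

end TwoSidedIdeal

section Retraction

open Submodule

variable {B : Type*} [Ring B] {A : Subring B} {ε : B →+* A}

theorem setOf_eq_zero_eq_coe_ker : {b : B | ε b = 0} = (TwoSidedIdeal.ker ε : Set B) :=
  Set.ext fun _ => (TwoSidedIdeal.mem_ker ε).symm

theorem setOf_span_add_ker_eq_coe_comap (hε : ∀ a : A, ε a = a) (J : TwoSidedIdeal A) :
    {x : B | ∃ a ∈ TwoSidedIdeal.span ((↑) '' (J : Set A)), ∃ b, ε b = 0 ∧ x = a + b} =
      (TwoSidedIdeal.comap ε J : Set B) := by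
  ext x
  simp only [Set.mem_ofPred_eq, SetLike.mem_coe, TwoSidedIdeal.mem_comap]
  constructor
  · rintro ⟨a, ha, b, hb, rfl⟩
    have hspan : TwoSidedIdeal.span ((↑) '' (J : Set A)) ≤ TwoSidedIdeal.comap ε J :=
      TwoSidedIdeal.span_le.mpr (by rintro _ ⟨j, hj, rfl⟩; simpa [TwoSidedIdeal.mem_comap, hε])
    rw [map_add, hb, add_zero]
    exact (TwoSidedIdeal.mem_comap ε).mp (hspan ha)
  · intro hx
    exact ⟨ε x, TwoSidedIdeal.subset_span ⟨ε x, hx, rfl⟩, x - ε x, by rw [map_sub, hε, sub_self],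
      by abel⟩

theorem span_int_coe_comap_le (hε : ∀ a : A, ε a = a) (J : TwoSidedIdeal A) :
    span ℤ (TwoSidedIdeal.comap ε J : Set B) ≤
      span ℤ ((↑) '' (J : Set A)) ⊔ span ℤ (TwoSidedIdeal.ker ε : Set B) := by
  rw [span_le]
  intro x hx
  rw [← add_sub_cancel (ε x : B) x]
  exact add_mem_sup (subset_span ⟨ε x, (TwoSidedIdeal.mem_comap ε).mp hx, rfl⟩)
    (subset_span ((TwoSidedIdeal.mem_ker ε).mpr (by rw [map_sub, hε, sub_self])))

theorem span_int_image_le_span_int_comap (hε : ∀ a : A, ε a = a) (J : TwoSidedIdeal A) :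
    span ℤ ((↑) '' (J : Set A)) ≤ span ℤ (TwoSidedIdeal.comap ε J : Set B) :=
  span_mono (by rintro _ ⟨j, hj, rfl⟩; simpa [TwoSidedIdeal.mem_comap, hε])

theorem span_int_ker_le_span_int_comap (J : TwoSidedIdeal A) :
    span ℤ (TwoSidedIdeal.ker ε : Set B) ≤ span ℤ (TwoSidedIdeal.comap ε J : Set B) :=
  span_mono fun x hx => by
    simp [TwoSidedIdeal.mem_comap, (TwoSidedIdeal.mem_ker ε).mp hx]

end Retraction

/-- Let `B` be a ring, `A ⊆ B` a subring, `ε : B → A` a ring homomorphism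
restricting to the identity on `A`, `I = ker ε` and `J` a two-sided ideal of `A`.
Then for every `n ≥ 1`:
(i)  `⟨Jⁿ⟩ + Iⁿ ⊆ (⟨J⟩ + I)ⁿ`, and
(ii) `(⟨J⟩ + I)^(2(n² + n − 1)) ⊆ ⟨Jⁿ⟩ + Iⁿ`;
i.e. the filtrations `(⟨Jⁿ⟩ + Iⁿ)ₙ` and `((⟨J⟩ + I)ⁿ)ₙ` are interleaved, which expresses the
pro-ring isomorphism `B/(⟨Jⁿ⟩+Iⁿ)^∞ ≅ B/(⟨J⟩+I)^∞` of Lemma 3.7. -/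
theorem filtration_interleaving {B : Type*} [Ring B] (A : Subring B) (ε : B →+* A)
    (hε : ∀ a : A, ε (a : B) = a) (J : TwoSidedIdeal A) (n : ℕ) (hn : 1 ≤ n) :
    AddSubgroup.closure
        ((TwoSidedIdeal.span ((↑) '' (setPow (J : Set A) n : Set A)) : TwoSidedIdeal B) : Set B) ⊔
        setPow {b : B | ε b = 0} n ≤
      setPow {x : B | ∃ a ∈ TwoSidedIdeal.span ((↑) '' (J : Set A)),
        ∃ b, ε b = 0 ∧ x = a + b} n
    ∧
    setPow {x : B | ∃ a ∈ TwoSidedIdeal.span ((↑) '' (J : Set A)),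
        ∃ b, ε b = 0 ∧ x = a + b} (2 * (n ^ 2 + n - 1)) ≤
      AddSubgroup.closure
        ((TwoSidedIdeal.span ((↑) '' (setPow (J : Set A) n : Set A)) : TwoSidedIdeal B) : Set B) ⊔
        setPow {b : B | ε b = 0} n := by
  rw [setOf_span_add_ker_eq_coe_comap hε J, setOf_eq_zero_eq_coe_ker,
    ← Submodule.span_int_eq_addSubgroupClosure, TwoSidedIdeal.span_int_coe_span,
    span_int_coe_image_setPow]
  simp only [setPow_eq_toAddSubgroup_span_pow, ← Submodule.sup_toAddSubgroup,
    Submodule.toAddSubgroup_le]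
  have hn0 : n ≠ 0 := Nat.one_le_iff_ne_zero.mp hn
  have hN : n * n ≤ 2 * (n ^ 2 + n - 1) := by
    zify [show 1 ≤ n ^ 2 + n by nlinarith]; nlinarith
  set P := Submodule.span ℤ (TwoSidedIdeal.comap ε J : Set B)
  set 𝒥 := Submodule.span ℤ ((↑) '' (J : Set A) : Set B)
  set ℐ := Submodule.span ℤ (TwoSidedIdeal.ker ε : Set B)
  refine ⟨IdemSemiring.top_mul_pow_mul_top_sup_pow_le (TwoSidedIdeal.top_mul_span_int_le _)
      (TwoSidedIdeal.span_int_mul_top_le _) (span_int_image_le_span_int_comap hε J)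
      (span_int_ker_le_span_int_comap J) hn0, ?_⟩
  calc P ^ (2 * (n ^ 2 + n - 1)) ≤ (𝒥 ⊔ ℐ) ^ (2 * (n ^ 2 + n - 1)) := by
        gcongr; exact span_int_coe_comap_le hε J
    _ ≤ ⊤ * 𝒥 ^ n * ⊤ ⊔ ℐ ^ n :=
        IdemSemiring.sup_pow_le (TwoSidedIdeal.top_mul_span_int_le _)
          (TwoSidedIdeal.span_int_mul_top_le _) hn0 hN
end

section
/- For every integer n ≥ 1, with N = n² + n − 1, the N-th power of the two-sided ideal of B generated by J is contained in ⟨Jⁿ⟩ + Iⁿ; that is, ⟨J⟩^(n²+n−1) ⊆ ⟨Jⁿ⟩ + Iⁿ. -/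
open scoped Pointwise

namespace List

variable {α : Type*}

theorem exists_infix_length_eq_forall_of_countP_le (p : α → Prop) [DecidablePred p] (n t : ℕ)
    (l : List α) (hlen : (t + 1) * n ≤ l.length) (hcount : l.countP (fun x => ¬ p x) ≤ t) :
    ∃ l', l' <:+: l ∧ l'.length = n ∧ ∀ x ∈ l', p x := by
  induction t generalizing l with
  | zero =>
    have hall : ∀ x ∈ l, p x := by simpa [countP_eq_zero] using hcount
    exact ⟨l.take n, (take_prefix n l).isInfix, by simp; omega,
      fun x hx => hall x (mem_of_mem_take hx)⟩
  | succ t ih =>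
    by_cases htake : ∀ x ∈ l.take n, p x
    · exact ⟨l.take n, (take_prefix n l).isInfix, by simp; nlinarith, htake⟩
    have hbad : 0 < (l.take n).countP (fun x => ¬ p x) := by simpa [countP_pos_iff] using htake
    have hsplit := countP_append (l₁ := l.take n) (l₂ := l.drop n) (p := fun x => ¬ p x)
    rw [take_append_drop] at hsplit
    rw [add_mul, one_mul] at hlen
    obtain ⟨l', hl', hlen', hp⟩ := ih (l.drop n) (by rw [length_drop]; omega) (by omega)
    exact ⟨l', hl'.trans (drop_suffix n l).isInfix, hlen', hp⟩

end List

open List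

section setPow

variable {B : Type*} [Ring B] {U : Set B} {n : ℕ}

theorem list_prod_mem_setPow {l : List B} (hlen : l.length = n) (hl : ∀ y ∈ l, y ∈ U) :
    l.prod ∈ setPow U n :=
  AddSubgroup.subset_closure ⟨l, hlen, hl, rfl⟩

theorem setPow_le_iff {H : AddSubgroup B} :
    setPow U n ≤ H ↔ ∀ l : List B, l.length = n → (∀ y ∈ l, y ∈ U) → l.prod ∈ H := by
  rw [setPow, AddSubgroup.closure_le]
  constructor
  · exact fun h l hlen hl => h ⟨l, hlen, hl, rfl⟩
  · rintro h _ ⟨l, hlen, hl, rfl⟩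
    exact h l hlen hl

theorem mul_mem_setPow_of_forall {V : Set B} {m : ℕ} {b x : B}
    (h : ∀ l : List B, l.length = n → (∀ y ∈ l, y ∈ U) → b * l.prod ∈ setPow V m)
    (hx : x ∈ setPow U n) : b * x ∈ setPow V m :=
  (setPow_le_iff (H := (setPow V m).comap (AddMonoidHom.mulLeft b))).2 h hx

theorem mul_mem_setPow_succ {a x : B} (ha : a ∈ U) (hx : x ∈ setPow U n) :
    a * x ∈ setPow U (n + 1) :=
  mul_mem_setPow_of_forall (fun l hlen hl => by
    simpa using list_prod_mem_setPow (l := a :: l) (by simp [hlen])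
      (forall_mem_cons.2 ⟨ha, hl⟩)) hx

theorem mul_mem_setPow_succ_of_twoSidedIdeal (I : TwoSidedIdeal B) (b : B) {x : B}
    (hx : x ∈ setPow I (n + 1)) : b * x ∈ setPow I (n + 1) := by
  refine mul_mem_setPow_of_forall (fun l hlen hl => ?_) hx
  obtain ⟨a, l, rfl⟩ := exists_cons_of_length_eq_add_one hlen
  rw [prod_cons, ← mul_assoc]
  exact list_prod_mem_setPow (l := b * a :: l) hlen
    (forall_mem_cons.2 ⟨I.mul_mem_left _ _ (hl a mem_cons_self),
      fun y hy => hl y (mem_cons_of_mem _ hy)⟩)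

theorem list_prod_mem_setPow_of_le_countP (I : TwoSidedIdeal B) [DecidablePred (· ∈ I)]
    {l : List B} (h : n + 1 ≤ l.countP (· ∈ I)) : l.prod ∈ setPow I (n + 1) := by
  induction l generalizing n with
  | nil => simp at h
  | cons a l ih =>
    rw [prod_cons]
    by_cases ha : a ∈ I
    · rw [countP_cons_of_pos (by simpa)] at h
      cases n with
      | zero =>
        simpa using list_prod_mem_setPow (l := [a * l.prod]) rfl
          (forall_mem_singleton.2 (I.mul_mem_right _ _ ha))
      | succ n => exact mul_mem_setPow_succ ha (ih (by omega))
    · rw [countP_cons_of_neg (by simpa)] at h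
      exact mul_mem_setPow_succ_of_twoSidedIdeal I a (ih h)

theorem list_prod_mem_setPow_union {S T : Set B} {l : List B} (hl : ∀ y ∈ l, y ∈ S + T) :
    l.prod ∈ setPow (S ∪ T) l.length := by
  induction l with
  | nil => exact list_prod_mem_setPow rfl (by simp)
  | cons a l ih =>
    obtain ⟨s, hs, t, ht, rfl⟩ := hl a mem_cons_self
    have hrest := ih fun y hy => hl y (mem_cons_of_mem _ hy)
    rw [prod_cons, add_mul]
    exact add_mem (mul_mem_setPow_succ (Or.inl hs) hrest) (mul_mem_setPow_succ (Or.inr ht) hrest)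

theorem setPow_le_setPow_union {S T : Set B} (hU : U ⊆ S + T) :
    setPow U n ≤ setPow (S ∪ T) n :=
  setPow_le_iff.2 fun _ hlen hl => hlen ▸ list_prod_mem_setPow_union fun y hy => hU (hl y hy)

theorem list_prod_mem_image_setPow {A : Type*} [Ring A] (f : A →+* B) {J : Set A} {l : List B}
    (hl : ∀ y ∈ l, y ∈ f '' J) : l.prod ∈ f '' (setPow J l.length : Set A) := by
  induction l with
  | nil => exact ⟨1, list_prod_mem_setPow (l := []) rfl (by simp), map_one f⟩
  | cons b l ih =>
    obtain ⟨a, ha, rfl⟩ := hl b mem_cons_self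
    obtain ⟨x, hx, hfx⟩ := ih fun y hy => hl y (mem_cons_of_mem _ hy)
    exact ⟨a * x, mul_mem_setPow_succ ha hx, by rw [map_mul, hfx, prod_cons]⟩

end setPow

section Retraction

variable {B : Type*} [Ring B] {A : Subring B} {ε : B →+* A}

theorem span_image_le_comap (hε : ∀ a : A, ε (a : B) = a) (J : TwoSidedIdeal A) :
    TwoSidedIdeal.span ((↑) '' (J : Set A)) ≤ J.comap ε :=
  TwoSidedIdeal.span_le.2 <| by
    rintro _ ⟨a, ha, rfl⟩
    simpa [TwoSidedIdeal.mem_comap, hε] using ha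

theorem span_image_subset_image_add_ker (hε : ∀ a : A, ε (a : B) = a) (J : TwoSidedIdeal A) :
    (TwoSidedIdeal.span (((↑) : A → B) '' J) : Set B) ⊆
      ((↑) '' (J : Set A)) + (TwoSidedIdeal.ker ε : Set B) := by
  intro x hx
  have hεx : ε x ∈ J := (TwoSidedIdeal.mem_comap ε).1 (span_image_le_comap hε J hx)
  refine ⟨(ε x : B), ⟨ε x, hεx, rfl⟩, x - ε x, ?_, add_sub_cancel _ _⟩
  rw [SetLike.mem_coe, TwoSidedIdeal.mem_ker, map_sub, hε, sub_self]

end Retraction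

/-- Let `B` be a ring, `A ⊆ B` a subring, `ε : B → A` a ring homomorphism
restricting to the identity on `A`, `I = ker ε` and `J` a two-sided ideal of `A`.
Then for every `n ≥ 1`, with `N = n² + n − 1`, one has `⟨J⟩^N ⊆ ⟨Jⁿ⟩ + Iⁿ`. -/
theorem span_pow_le_span_pow_add_ker_pow {B : Type*} [Ring B] (A : Subring B) (ε : B →+* A)
    (hε : ∀ a : A, ε (a : B) = a) (J : TwoSidedIdeal A) (n : ℕ) (hn : 1 ≤ n) :
    setPow ((TwoSidedIdeal.span ((↑) '' (J : Set A)) : TwoSidedIdeal B) : Set B)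
        (n ^ 2 + n - 1) ≤
      AddSubgroup.closure
        ((TwoSidedIdeal.span ((↑) '' (setPow (J : Set A) n : Set A)) : TwoSidedIdeal B) : Set B) ⊔
        setPow {b : B | ε b = 0} n := by
  have hker : {b : B | ε b = 0} = (TwoSidedIdeal.ker ε : Set B) :=
    Set.ext fun _ => (TwoSidedIdeal.mem_ker ε).symm
  rw [hker]
  classical
  refine (setPow_le_setPow_union (span_image_subset_image_add_ker hε J)).trans
    (setPow_le_iff.2 fun l hlen hl => ?_)
  by_cases hI : n ≤ l.countP (· ∈ TwoSidedIdeal.ker ε)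
  · obtain ⟨k, rfl⟩ := Nat.exists_eq_add_of_le' hn
    exact AddSubgroup.mem_sup_right (list_prod_mem_setPow_of_le_countP _ hI)
  · have hJ : l.countP (· ∉ ((↑) '' (J : Set A) : Set B)) ≤ n - 1 :=
      (countP_mono_left (q := (· ∈ TwoSidedIdeal.ker ε)) fun x hx hxJ =>
        decide_eq_true ((hl x hx).resolve_left (of_decide_eq_true hxJ))).trans (by omega)
    obtain ⟨l', ⟨s, t, rfl⟩, hlen', hl'⟩ :=
      exists_infix_length_eq_forall_of_countP_le _ n (n - 1) l
        (by rw [Nat.sub_add_cancel hn, hlen, sq]; omega) hJ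
    obtain ⟨x, hx, hx'⟩ := list_prod_mem_image_setPow A.subtype hl'
    refine AddSubgroup.mem_sup_left (AddSubgroup.subset_closure ?_)
    rw [prod_append, prod_append]
    exact TwoSidedIdeal.mul_mem_right _ _ _
      (TwoSidedIdeal.mul_mem_left _ _ _ (TwoSidedIdeal.subset_span ⟨x, hlen' ▸ hx, hx'⟩))
end

section
/- Let q : K → H and p : H → G be surjective group homomorphisms. Suppose that the descending series of ker p in H (defined by N⁽¹⁾ = ker p, N⁽ᵐ⁺¹⁾ = ⁅H, N⁽ᵐ⁾⁆) is trivial at step k, and that the corresponding series of ker q in K is trivial at step l. Then the series of ker(p ∘ q) in K is trivial at step k + l. In particular the composite of two surjective group homomorphisms whose kernels are 'nilpotently embedded' (some iterated commutator with the ambient group vanishes) again has a nilpotently embedded kernel. (Instance of Lemma 1.9(1) in the category of groups with shrinking functor s(G, N) = [G, N].) -/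
/-- The descending series of a normal subgroup `N` of `W`: `N⁽¹⁾ = N`,
`N⁽ᵐ⁺¹⁾ = ⁅W, N⁽ᵐ⁾⁆`.  (The value at `0` is set to `⊤` and is irrelevant.) -/
def descSeries {W : Type*} [Group W] (N : Subgroup W) : ℕ → Subgroup W
  | 0 => ⊤
  | 1 => N
  | (m + 2) => ⁅(⊤ : Subgroup W), descSeries N (m + 1)⁆

/-!
Pulling back along `q`, the `(k+1)`-st term of the series of `ker (p ∘ q) = q⁻¹(ker p)` lies in
`q⁻¹((ker p)⁽ᵏ⁺¹⁾) ⊆ q⁻¹((ker p)⁽ᵏ⁾) = ker q`.  The term of index `k + l` lies in the `l`-th term of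
the series of the `(k+1)`-st, hence in `(ker q)⁽ˡ⁾ = 1`.
-/

namespace descSeries

variable {W W' : Type*} [Group W] [Group W']

theorem mono {N M : Subgroup W} (h : N ≤ M) : ∀ m, descSeries N m ≤ descSeries M m
  | 0 => le_rfl
  | 1 => h
  | m + 2 => Subgroup.commutator_mono le_rfl (mono h (m + 1))

instance normal (N : Subgroup W) [N.Normal] : ∀ m, (descSeries N m).Normal
  | 0 => Subgroup.normal_top
  | 1 => ‹N.Normal›
  | m + 2 => haveI := normal N (m + 1); Subgroup.commutator_normal _ _

theorem succ_le (N : Subgroup W) [N.Normal] : ∀ m, descSeries N (m + 1) ≤ descSeries N m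
  | 0 => le_top
  | _ + 1 => Subgroup.commutator_le_right _ _

theorem comap_le (f : W →* W') (N : Subgroup W') :
    ∀ m, descSeries (N.comap f) m ≤ (descSeries N m).comap f
  | 0 => le_top
  | 1 => le_rfl
  | m + 2 => by
    rw [← Subgroup.map_le_iff_le_comap]
    change Subgroup.map f ⁅⊤, descSeries (N.comap f) (m + 1)⁆ ≤ ⁅⊤, descSeries N (m + 1)⁆
    rw [Subgroup.map_commutator]
    exact Subgroup.commutator_mono le_top
      (Subgroup.map_le_iff_le_comap.mpr (comap_le f N (m + 1)))

theorem add_le (N : Subgroup W) :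
    ∀ a b, descSeries N (a + b) ≤ descSeries (descSeries N (a + 1)) b
  | _, 0 => le_top
  | _, 1 => le_rfl
  | a, b + 2 => Subgroup.commutator_mono le_rfl (add_le N a (b + 1))

end descSeries

theorem descSeries_ker_comp_trivial_general {K H G : Type*} [Group K] [Group H] [Group G]
    (q : K →* H) (p : H →* G)
    (k l : ℕ)
    (hpk : descSeries p.ker k = ⊥) (hql : descSeries q.ker l = ⊥) :
    descSeries (p.comp q).ker (k + l) = ⊥ := by
  have hkq : descSeries (p.comp q).ker (k + 1) ≤ q.ker := calc
    descSeries (p.comp q).ker (k + 1) ≤ (descSeries p.ker (k + 1)).comap q := by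
      rw [← MonoidHom.comap_ker]; exact descSeries.comap_le q p.ker (k + 1)
    _ ≤ (descSeries p.ker k).comap q := Subgroup.comap_mono (descSeries.succ_le p.ker k)
    _ = q.ker := by rw [hpk, MonoidHom.comap_bot]
  refine le_bot_iff.mp ?_
  calc descSeries (p.comp q).ker (k + l)
      ≤ descSeries (descSeries (p.comp q).ker (k + 1)) l := descSeries.add_le _ k l
    _ ≤ descSeries q.ker l := descSeries.mono hkq l
    _ = ⊥ := hql

/-- If `q : K → H` and `p : H → G` are surjective group homomorphisms, the
series of `ker p` in `H` is trivial at step `k` and the series of `ker q` in `K` is trivial at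
step `l`, then the series of `ker (p ∘ q)` in `K` is trivial at step `k + l`. -/
theorem descSeries_ker_comp_trivial {K H G : Type*} [Group K] [Group H] [Group G]
    (q : K →* H) (p : H →* G) (hq : Function.Surjective q) (hp : Function.Surjective p)
    (k l : ℕ) (hk : 1 ≤ k) (hl : 1 ≤ l)
    (hpk : descSeries p.ker k = ⊥) (hql : descSeries q.ker l = ⊥) :
    descSeries (p.comp q).ker (k + l) = ⊥ :=
  descSeries_ker_comp_trivial_general q p k l hpk hql
end

section
/- Let π : X → Y be a surjective group homomorphism with kernel N, and suppose the descending series N⁽¹⁾ = N, N⁽ᵐ⁺¹⁾ = ⁅X, N⁽ᵐ⁾⁆ satisfies N⁽ⁿ⁾ = 1. Let f : A → Y be any group homomorphism and let P = {(a, x) ∈ A × X : f(a) = π(x)} be the pullback subgroup of A × X. Then the first projection P → A is surjective, and its kernel K = {(1, x) : π(x) = 1} (which the second projection maps isomorphically onto N) satisfies K⁽ⁿ⁾ = 1, where the series is computed in P. (Instance of Lemma 1.9(1): deformations are closed under base change, in the category of groups with shrinking functor s(G, N) = [G, N].) -/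
/-- The pullback `P = {(a, x) | f a = π x}` of two group homomorphisms, as a subgroup of
`A × X`. -/
def pullbackSubgroup {A X Y : Type*} [Group A] [Group X] [Group Y]
    (f : A →* Y) (π : X →* Y) : Subgroup (A × X) where
  carrier := {p | f p.1 = π p.2}
  one_mem' := by simp
  mul_mem' := by
    intro a b ha hb
    simp only [Set.mem_setOf_eq, Prod.fst_mul, Prod.snd_mul, map_mul] at *
    rw [ha, hb]
  inv_mem' := by
    intro a ha
    simp only [Set.mem_setOf_eq, Prod.fst_inv, Prod.snd_inv, map_inv] at *
    rw [ha]

lemma descSeries_mono {W : Type*} [Group W] {N N' : Subgroup W} (h : N ≤ N') :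
    ∀ m, descSeries N m ≤ descSeries N' m
  | 0 => le_rfl
  | 1 => h
  | (m + 2) => Subgroup.commutator_mono le_rfl (descSeries_mono h (m + 1))

lemma descSeries_map_le {W W' : Type*} [Group W] [Group W'] (φ : W →* W') (N : Subgroup W) :
    ∀ m, (descSeries N m).map φ ≤ descSeries (N.map φ) m
  | 0 => le_top
  | 1 => le_rfl
  | (m + 2) => by
      rw [show descSeries N (m+2) = ⁅(⊤ : Subgroup W), descSeries N (m+1)⁆ from rfl,
        Subgroup.map_commutator]
      exact Subgroup.commutator_mono le_top (descSeries_map_le φ N (m + 1))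

lemma descSeries_le_self {W : Type*} [Group W] (N : Subgroup W) [N.Normal] :
    ∀ m, 1 ≤ m → descSeries N m ≤ N
  | 1, _ => le_rfl
  | (m + 2), _ => by
      rw [show descSeries N (m+2) = ⁅(⊤ : Subgroup W), descSeries N (m+1)⁆ from rfl,
        Subgroup.commutator_le]
      intro g _ h hh
      have hhN : h ∈ N := descSeries_le_self N (m + 1) (Nat.le_add_left 1 m) hh
      exact mul_mem (Subgroup.Normal.conj_mem ‹N.Normal› h hhN g) (inv_mem hhN)

/-- Let `π : X → Y` be a surjective group homomorphism whose kernel `N`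
satisfies `N⁽ⁿ⁾ = 1`, and let `f : A → Y` be any group homomorphism.  Then the first
projection from the pullback `P = {(a, x) | f a = π x}` to `A` is surjective, and its kernel
`K` satisfies `K⁽ⁿ⁾ = 1`, the series being computed in `P`. -/
theorem pullback_proj_surjective_descSeries_trivial {A X Y : Type*}
    [Group A] [Group X] [Group Y] (π : X →* Y) (hπ : Function.Surjective π)
    (n : ℕ) (hn : 1 ≤ n) (hN : descSeries π.ker n = ⊥)
    (f : A →* Y) :
    Function.Surjective ((MonoidHom.fst A X).comp (pullbackSubgroup f π).subtype) ∧
      descSeries ((MonoidHom.fst A X).comp (pullbackSubgroup f π).subtype).ker n = ⊥ := by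
  set P := pullbackSubgroup f π
  set pr₁ := (MonoidHom.fst A X).comp P.subtype
  set K := pr₁.ker
  set q : P →* X := (MonoidHom.snd A X).comp P.subtype
  constructor
  · intro a
    obtain ⟨x, hx⟩ := hπ (f a)
    exact ⟨⟨(a, x), hx.symm⟩, rfl⟩
  · -- K maps into ker π under q
    have hKmap : K.map q ≤ π.ker := by
      rintro _ ⟨p, hp, rfl⟩
      have h1 : (p : A × X).1 = 1 := hp
      have h2 : f (p : A × X).1 = π (p : A × X).2 := p.2
      simp only [h1, map_one] at h2
      exact h2.symm
    have key : (descSeries K n).map q ≤ (⊥ : Subgroup X) := by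
      calc (descSeries K n).map q ≤ descSeries (K.map q) n := descSeries_map_le q K n
        _ ≤ descSeries π.ker n := descSeries_mono hKmap n
        _ = ⊥ := hN
    rw [eq_bot_iff]
    intro p hp
    have hpK : p ∈ K := descSeries_le_self K n hn hp
    have h1 : (p : A × X).1 = 1 := hpK
    have h2 : (p : A × X).2 = 1 := key ⟨p, hp, rfl⟩
    have : p = 1 := by
      apply Subtype.ext
      exact Prod.ext h1 h2
    simp [this, Subgroup.mem_bot]
end

section
/- Let D be any category and F a functor from the category of associative unital rings to D. For each ring A let ε_A : A[X] → A be the ring homomorphism restricting to the identity on A and sending X to 0. Suppose that F(ε_A) is an isomorphism for every ring A. Then for every ℕ-graded ring A = ⊕ₙ Aₙ, the functor F sends the inclusion ι : A₀ → A of the degree-zero subring and the projection π : A → A₀ onto the degree-zero component to mutually inverse isomorphisms in D. (This is the step in the proof of Theorem 3.5 showing that the Poincaré lemma for polynomials, condition 1-ii), implies that X maps the projection of a graded ring onto its degree-zero part to a weak equivalence.) -/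
universe u v w

open CategoryTheory

/-- The inclusion of the degree-zero component `𝒜 0` of an `ℕ`-graded ring `A` as a ring
homomorphism `A₀ → A`. -/
def gradeZeroInclusion {A : Type u} [Ring A] (𝒜 : ℕ → AddSubgroup A)
    [GradedRing 𝒜] : (𝒜 0) →+* A :=
  (SetLike.GradeZero.subring 𝒜).subtype

open Polynomial DirectSum

section Aux

variable {A : Type u} [Ring A] (𝒜 : ℕ → AddSubgroup A) [GradedRing 𝒜]

/-- The ring hom `⨁ 𝒜 i → A[X]` sending a degree-`n` element `a` to `C a * X^n`. -/
noncomputable def gradedToPoly₀ : (⨁ i, 𝒜 i) →+* Polynomial A :=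
  DirectSum.toSemiring
    (fun i => (AddMonoidHom.mulRight ((X : Polynomial A) ^ i)).comp
        (Polynomial.C.toAddMonoidHom.comp (𝒜 i).subtype))
    (by simp)
    (by
      intro i j ai aj
      simp only [AddMonoidHom.coe_comp, Function.comp_apply, AddMonoidHom.coe_mulRight,
        RingHom.toAddMonoidHom_eq_coe, AddMonoidHom.coe_coe, AddSubgroup.coe_subtype,
        SetLike.coe_gMul, map_mul]
      rw [mul_assoc (Polynomial.C (ai : A)) ((X : Polynomial A) ^ i),
        ← mul_assoc ((X : Polynomial A) ^ i), X_pow_mul, mul_assoc (Polynomial.C (aj : A)),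
        ← pow_add, mul_assoc])

@[simp] theorem gradedToPoly₀_of (i : ℕ) (x : 𝒜 i) :
    gradedToPoly₀ 𝒜 (DirectSum.of _ i x) = Polynomial.C (x : A) * X ^ i :=
  DirectSum.toSemiring_of _ _ _ _ _

/-- The ring hom `A → A[X]` sending `a = Σ aₙ` to `Σ C aₙ * X^n`. -/
noncomputable def gradedToPoly : A →+* Polynomial A :=
  (gradedToPoly₀ 𝒜).comp (DirectSum.decomposeRingEquiv 𝒜).toRingHom

/-- Evaluation at `1`, as a ring hom (valid in the noncommutative case since `1` is central). -/
noncomputable def evalOne : Polynomial A →+* A :=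
  Polynomial.eval₂RingHom' (RingHom.id A) 1 (fun a => Commute.one_right _)

theorem const_comp_gradedToPoly :
    (Polynomial.constantCoeff).comp (gradedToPoly 𝒜) =
      (gradeZeroInclusion 𝒜).comp (GradedRing.projZeroRingHom' 𝒜) := by
  have : (Polynomial.constantCoeff).comp (gradedToPoly₀ 𝒜) =
      ((gradeZeroInclusion 𝒜).comp (GradedRing.projZeroRingHom' 𝒜)).comp
        ((DirectSum.decomposeRingEquiv 𝒜).symm : (⨁ i, 𝒜 i) ≃+* A).toRingHom := by
    refine DirectSum.ringHom_ext fun i x => ?_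
    simp only [RingHom.comp_apply, RingEquiv.toRingHom_eq_coe, RingHom.coe_coe,
      gradedToPoly₀_of]
    have hsymm : ((DirectSum.decomposeRingEquiv 𝒜).symm (DirectSum.of _ i x) : A) = x :=
      DirectSum.decompose_symm_of 𝒜 x
    rw [hsymm]
    have hcc : Polynomial.constantCoeff (Polynomial.C (x : A) * X ^ i) =
        if i = 0 then (x : A) else 0 := by
      show (Polynomial.C (x : A) * X ^ i).coeff 0 = _
      rw [Polynomial.coeff_C_mul, Polynomial.coeff_X_pow]
      rcases eq_or_ne i 0 with rfl | hi
      · simp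
      · simp [hi, Ne.symm hi]
    rw [hcc]
    have hproj : (gradeZeroInclusion 𝒜) ((GradedRing.projZeroRingHom' 𝒜) (x : A)) =
        ((DirectSum.decompose 𝒜 (x : A) 0 : 𝒜 0) : A) := rfl
    rw [hproj]
    rcases eq_or_ne i 0 with rfl | hi
    · rw [if_pos rfl, DirectSum.decompose_of_mem_same 𝒜 x.2]
    · rw [if_neg hi, DirectSum.decompose_of_mem_ne 𝒜 x.2 hi]
  ext a
  have := RingHom.congr_fun this ((DirectSum.decomposeRingEquiv 𝒜) a)
  simpa [gradedToPoly] using this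

theorem evalOne_comp_gradedToPoly :
    (evalOne (A := A)).comp (gradedToPoly 𝒜) = RingHom.id A := by
  have : (evalOne (A := A)).comp (gradedToPoly₀ 𝒜) =
      (RingHom.id A).comp
        ((DirectSum.decomposeRingEquiv 𝒜).symm : (⨁ i, 𝒜 i) ≃+* A).toRingHom := by
    refine DirectSum.ringHom_ext fun i x => ?_
    simp only [RingHom.comp_apply, RingEquiv.toRingHom_eq_coe, RingHom.coe_coe,
      gradedToPoly₀_of, map_mul, map_pow, RingHom.id_apply]
    have hsymm : ((DirectSum.decomposeRingEquiv 𝒜).symm (DirectSum.of _ i x) : A) = x :=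
      DirectSum.decompose_symm_of 𝒜 x
    have hC : evalOne (A := A) (Polynomial.C (x : A)) = (x : A) := by
      simp [evalOne]
    have hX : evalOne (A := A) (X : Polynomial A) = 1 := by
      simp [evalOne]
    rw [hC, hX, one_pow, mul_one, hsymm]
  ext a
  have := RingHom.congr_fun this ((DirectSum.decomposeRingEquiv 𝒜) a)
  simpa [gradedToPoly] using this

theorem const_comp_C : (Polynomial.constantCoeff).comp (Polynomial.C : A →+* Polynomial A) =
    RingHom.id A := by ext a; simp

theorem evalOne_comp_C : (evalOne (A := A)).comp (Polynomial.C : A →+* Polynomial A) =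
    RingHom.id A := by ext a; simp [evalOne]

end Aux

/-- Let `F` be a functor from rings to any category `D` such that for every
ring `A` the evaluation-at-zero homomorphism `ε_A : A[X] → A` is sent to an isomorphism.
Then for every `ℕ`-graded ring `A = ⊕ₙ Aₙ`, `F` sends the inclusion `ι : A₀ → A` and the
projection `π : A → A₀` to mutually inverse isomorphisms. -/
theorem functor_inverts_graded_projection {D : Type v} [Category.{w} D]
    (F : RingCat.{u} ⥤ D)
    (hF : ∀ (R : Type u) [Ring R],
      IsIso (F.map (RingCat.ofHom (Polynomial.constantCoeff : Polynomial R →+* R))))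
    (A : Type u) [Ring A] (𝒜 : ℕ → AddSubgroup A) [GradedRing 𝒜] :
    F.map (RingCat.ofHom (gradeZeroInclusion 𝒜)) ≫
        F.map (RingCat.ofHom (GradedRing.projZeroRingHom' 𝒜)) = 𝟙 _ ∧
      F.map (RingCat.ofHom (GradedRing.projZeroRingHom' 𝒜)) ≫
        F.map (RingCat.ofHom (gradeZeroInclusion 𝒜)) = 𝟙 _ := by
  -- set up the maps
  set ε : RingCat.of (Polynomial A) ⟶ RingCat.of A :=
    RingCat.ofHom (Polynomial.constantCoeff : Polynomial A →+* A) with hε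
  set Cm : RingCat.of A ⟶ RingCat.of (Polynomial A) :=
    RingCat.ofHom (Polynomial.C : A →+* Polynomial A) with hCm
  set e1 : RingCat.of (Polynomial A) ⟶ RingCat.of A :=
    RingCat.ofHom (evalOne (A := A)) with he1
  set φ : RingCat.of A ⟶ RingCat.of (Polynomial A) :=
    RingCat.ofHom (gradedToPoly 𝒜) with hφ
  have hεiso : IsIso (F.map ε) := hF A
  have hCε : F.map Cm ≫ F.map ε = 𝟙 (F.obj (RingCat.of A)) := by
    rw [← F.map_comp, ← F.map_id]
    congr 1
    exact RingCat.hom_ext (const_comp_C (A := A))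
  have hCe1 : F.map Cm ≫ F.map e1 = 𝟙 (F.obj (RingCat.of A)) := by
    rw [← F.map_comp, ← F.map_id]
    congr 1
    exact RingCat.hom_ext (evalOne_comp_C (A := A))
  -- F.map Cm is the inverse of F.map ε, hence iso
  have hCinv : F.map Cm = inv (F.map ε) := IsIso.eq_inv_of_inv_hom_id hCε
  have hεC : F.map ε ≫ F.map Cm = 𝟙 _ := by
    rw [hCinv, IsIso.hom_inv_id]
  have hCiso : IsIso (F.map Cm) := ⟨F.map ε, hCε, hεC⟩
  -- hence F.map e1 = F.map ε
  have he1ε : F.map e1 = F.map ε := by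
    have := hCiso
    have h1 : F.map e1 = inv (F.map Cm) := IsIso.eq_inv_of_hom_inv_id hCe1
    have h2 : F.map ε = inv (F.map Cm) := IsIso.eq_inv_of_hom_inv_id hCε
    rw [h1, h2]
  constructor
  · rw [← F.map_comp, ← F.map_id]
    congr 1
    ext x
    exact congrArg Subtype.val (GradedRing.projZeroRingHom'_apply_coe 𝒜 x)
  · -- π ≫ ι = φ ≫ ε = φ ≫ e1 = id
    have h1 : F.map (RingCat.ofHom (GradedRing.projZeroRingHom' 𝒜)) ≫
        F.map (RingCat.ofHom (gradeZeroInclusion 𝒜)) = F.map φ ≫ F.map ε := by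
      rw [← F.map_comp, ← F.map_comp]
      congr 1
      exact RingCat.hom_ext (const_comp_gradedToPoly 𝒜).symm
    rw [h1, ← he1ε, ← F.map_comp, ← F.map_id]
    congr 1
    exact RingCat.hom_ext (evalOne_comp_gradedToPoly 𝒜)
end
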